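/- arXiv:2309.02116 — 6 statements merged into one kernel-verified Lean document; each statement's English description precedes it below -/
import Mathlib

section
/- Let ℋ = ⊕_{i∈ℤ} ℋ_i be a graded ℂ[∂]-module and {ϱ_k : ℋ^{⊗k} → ℋ[[λ₁,…,λ_{k−1}]]}_{k≥1} a collection of degree −1 conformal sesquilinear ℂ-linear maps. Then (ℋ, {ϱ_k}_{k≥1}) is a Leib∞[1]-conformal algebra if and only if the element ϱ = Σ_{k≥1} ϱ_k ∈ C^{−1}_cs(ℋ) is a Maurer–Cartan element of the graded Lie algebra (C•_cs(ℋ), ⟦·,·⟧), i.e. ⟦ϱ,ϱ⟧ = 0. -/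
noncomputable section
open scoped BigOperators Classical

namespace LCG

variable {V : Type} [AddCommGroup V] [Module ℂ V]

/-- An "arity map": a `k`-ary conformal map `𝒢^{⊗k} → 𝒢[[λ₁,…,λ_{k−1}]]`, encoded as a
function taking a degree function `d` for the arguments (used by operations obtained
by brackets, which involve Koszul signs), a sequence of arguments (only the first `k`
entries are relevant) and an exponent vector for the monomial `λ₁^{a_1}⋯λ_{k−1}^{a_{k-1}}`
(only the first `k−1` entries relevant), and returning the corresponding coefficient. -/
abbrev AMap (V : Type) := (ℕ → ℤ) → (ℕ → V) → (ℕ → ℕ) → V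

/-- Extension of a permutation of `Fin q` to `ℕ`, fixing everything `≥ q`. -/
def shExt {q : ℕ} (σ : Equiv.Perm (Fin q)) : ℕ → ℕ :=
  fun t => if h : t < q then ((σ ⟨t, h⟩ : Fin q) : ℕ) else t

/-- `σ` is an `(a, m)`-unshuffle: increasing on the first `a` indices and on the last
`m` indices. -/
def IsShuffle (a m : ℕ) (σ : Equiv.Perm (Fin (a + m))) : Prop :=
  (∀ s t : Fin (a + m), s < t → (t : ℕ) < a → σ s < σ t) ∧
  (∀ s t : Fin (a + m), s < t → a ≤ (s : ℕ) → σ s < σ t)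

/-- The Koszul sign `ε(σ)` of a permutation `σ` with respect to the degrees `d` of the
permuted homogeneous elements. -/
def koszul (d : ℕ → ℤ) {q : ℕ} (σ : Equiv.Perm (Fin q)) : ℤ :=
  ∏ p ∈ Finset.univ.filter (fun p : Fin q × Fin q => p.1 < p.2 ∧ σ p.2 < σ p.1),
    ((Int.negOnePow (d ((σ p.1 : Fin q) : ℕ) * d ((σ p.2 : Fin q) : ℕ))) : ℤ)

/-- The (unsigned) substitution term appearing in all the shuffle compositions:
`φ(h_{σ(1)},…,h_{σ(i−1)}, ψ(h_{σ(i)},…,h_{σ(i+l−2)}, h_{i+l−1}), h_{i+l},…,h_p)`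
with the variables of `φ` being
`λ_{σ(1)},…,λ_{σ(i−1)}, λ_{σ(i)}+⋯+λ_{σ(i+l−2)}+λ_{i+l−1}, λ_{i+l},…,λ_{p−1}`,
written coefficientwise (the substitution of the sum of variables being expanded via
multinomial coefficients).  Here `ii = i − 1` is `0`-indexed, `m` is the degree of the
inner map `ψ` (used only for the degree bookkeeping of the inserted element). -/
def dTerm (m : ℤ) (k l ii : ℕ) (σ : Equiv.Perm (Fin (ii + (l - 1))))
    (φ ψ : AMap V) (d : ℕ → ℤ) (h : ℕ → V) (a : ℕ → ℕ) : V :=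
  let σ' := shExt σ
  let q := ii + (l - 1)
  let dIn : ℕ → ℤ := fun t => if t < l - 1 then d (σ' (ii + t)) else d q
  let hIn : ℕ → V := fun t => if t < l - 1 then h (σ' (ii + t)) else h q
  let mIn : ℤ := (∑ t ∈ Finset.range (l - 1), d (σ' (ii + t))) + d q + m
  if ii + 1 < k then
    ∑ b ∈ Fintype.piFinset (fun t : Fin (l - 1) => Finset.range (a (σ' (ii + (t : ℕ))) + 1)),
      (Nat.multinomial Finset.univ
          (fun t : Fin l => if ht : (t : ℕ) < l - 1 then a (σ' (ii + (t : ℕ))) - b ⟨t, ht⟩ else a q) : ℤ) •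
        φ (fun s => if s < ii then d (σ' s) else if s = ii then mIn else d (s + (l - 1)))
          (fun s => if s < ii then h (σ' s) else if s = ii then
              ψ dIn hIn (fun t => if ht : t < l - 1 then b ⟨t, ht⟩ else 0)
            else h (s + (l - 1)))
          (fun s => if s < ii then a (σ' s) else if s = ii then
              ∑ t : Fin l, (if ht : (t : ℕ) < l - 1 then a (σ' (ii + (t : ℕ))) - b ⟨t, ht⟩ else a q)
            else a (s + (l - 1)))
  else
    φ (fun s => if s < ii then d (σ' s) else mIn)
      (fun s => if s < ii then h (σ' s) else ψ dIn hIn (fun t => a (σ' (ii + t))))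
      (fun s => a (σ' s))

/-- The shuffle composition `φ_k ⋄ ψ_l` (for `ψ` of degree `m`), with sign
`ε(σ)·(−1)^{m(|h_{σ(1)}|+⋯+|h_{σ(i−1)}|)}`. -/
def dia (m : ℤ) (k l : ℕ) (φ ψ : AMap V) : AMap V := fun d h a =>
  ∑ ii ∈ Finset.range k,
    ∑ σ ∈ Finset.univ.filter (fun σ : Equiv.Perm (Fin (ii + (l - 1))) => IsShuffle ii (l - 1) σ),
      (koszul d σ *
        ((Int.negOnePow (m * ∑ s ∈ Finset.range ii, d (shExt σ s))) : ℤ)) •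
        dTerm m k l ii σ φ ψ d h a

/-- The composition appearing in the `Leib_∞`-identities, with sign
`ε(σ)·sgn(σ)·(−1)^{(k−i−1)(l−1)}·(−1)^{l(|x_{σ(1)}|+⋯+|x_{σ(i−1)}|)}` (the inner map
`ρ_l` has degree `l − 2`). -/
def diaL (k l : ℕ) (φ ψ : AMap V) : AMap V := fun d h a =>
  ∑ ii ∈ Finset.range k,
    ∑ σ ∈ Finset.univ.filter (fun σ : Equiv.Perm (Fin (ii + (l - 1))) => IsShuffle ii (l - 1) σ),
      (koszul d σ * ((Equiv.Perm.sign σ : ℤ))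
        * ((Int.negOnePow (((k : ℤ) - ii - 2) * ((l : ℤ) - 1))) : ℤ)
        * ((Int.negOnePow ((l : ℤ) * ∑ s ∈ Finset.range ii, d (shExt σ s))) : ℤ)) •
        dTerm ((l : ℤ) - 2) k l ii σ φ ψ d h a

/-- `φ` only depends on its first `k` arguments and first `k-1` exponents (and not on
the degree function). -/
def IsArity (k : ℕ) (φ : AMap V) : Prop :=
  ∀ d d' h h' a a', (∀ j, j < k → h j = h' j) → (∀ j, j < k - 1 → a j = a' j) →
    φ d h a = φ d' h' a'

/-- `φ` is ℂ-multilinear in its first `k` arguments. -/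
def IsMultilin (k : ℕ) (φ : AMap V) : Prop :=
  ∀ d h a j, j < k →
    (∀ u v : V, φ d (Function.update h j (u + v)) a
      = φ d (Function.update h j u) a + φ d (Function.update h j v) a) ∧
    (∀ (c : ℂ) (u : V), φ d (Function.update h j (c • u)) a
      = c • φ d (Function.update h j u) a)

/-- Conformal sesquilinearity of a `k`-ary map:
`φ(…,∂x_j,…) = −λ_j·φ(…)` for `j < k−1` and `φ(…,∂x_k) = (∂+λ₁+⋯+λ_{k−1})·φ(…)`. -/
def IsSesq (D : V →ₗ[ℂ] V) (k : ℕ) (φ : AMap V) : Prop :=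
  (∀ d h a j, j < k - 1 → φ d (Function.update h j (D (h j))) a
      = - (if a j = 0 then 0 else φ d h (Function.update a j (a j - 1)))) ∧
  (∀ d h a, φ d (Function.update h (k - 1) (D (h (k - 1)))) a
      = D (φ d h a)
        + ∑ j ∈ Finset.range (k - 1), (if a j = 0 then 0 else φ d h (Function.update a j (a j - 1))))

/-- `φ` is homogeneous of degree `r` with respect to the grading `G`. -/
def HasDeg (G : ℤ → Submodule ℂ V) (k : ℕ) (r : ℤ) (φ : AMap V) : Prop :=
  ∀ (d : ℕ → ℤ) (h : ℕ → V) (a : ℕ → ℕ), (∀ j, j < k → h j ∈ G (d j)) →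
    φ d h a ∈ G ((∑ j ∈ Finset.range k, d j) + r)

/-- The grading of the shift `𝒢[−1]`: `(𝒢[−1])_i = 𝒢_{i−1}`. -/
def shiftG (G : ℤ → Submodule ℂ V) : ℤ → Submodule ℂ V := fun i => G (i - 1)

/-- The higher identities (iden-lca) of a `Leib_∞`-conformal algebra, evaluated on
homogeneous elements. -/
def LeibIdent (G : ℤ → Submodule ℂ V) (ρ : ℕ → AMap V) : Prop :=
  ∀ n, 1 ≤ n → ∀ (d : ℕ → ℤ) (h : ℕ → V), (∀ t, h t ∈ G (d t)) → ∀ a,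
    ∑ k ∈ Finset.Icc 1 n, diaL k (n + 1 - k) (ρ k) (ρ (n + 1 - k)) d h a = 0

/-- The higher identities (iden-lca1) of a `Leib_∞[1]`-conformal algebra, evaluated on
homogeneous elements: `∑_{k+l=n+1} ϱ_k ⋄ ϱ_l = 0`. -/
def LeibOneIdent (G : ℤ → Submodule ℂ V) (ϱ : ℕ → AMap V) : Prop :=
  ∀ n, 1 ≤ n → ∀ (d : ℕ → ℤ) (h : ℕ → V), (∀ t, h t ∈ G (d t)) → ∀ a,
    ∑ k ∈ Finset.Icc 1 n, dia (-1) k (n + 1 - k) (ϱ k) (ϱ (n + 1 - k)) d h a = 0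

/-- A `Leib_∞`-conformal algebra structure `{ρ_k}_{k≥1}` on the graded module `(V, G)`:
each `ρ_k` is a conformal sesquilinear ℂ-multilinear map of degree `k − 2`, and the
identities (iden-lca) hold. -/
def IsLeibInfty (G : ℤ → Submodule ℂ V) (D : V →ₗ[ℂ] V) (ρ : ℕ → AMap V) : Prop :=
  (∀ k, 1 ≤ k → IsArity k (ρ k) ∧ IsMultilin k (ρ k) ∧ IsSesq D k (ρ k)
      ∧ HasDeg G k ((k : ℤ) - 2) (ρ k)) ∧
  LeibIdent G ρ

/-- A `Leib_∞[1]`-conformal algebra structure `{ϱ_k}_{k≥1}` on the graded module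
`(V, G)`: each `ϱ_k` is conformal sesquilinear ℂ-multilinear of degree `−1`, and the
identities (iden-lca1) hold. -/
def IsLeibOne (G : ℤ → Submodule ℂ V) (D : V →ₗ[ℂ] V) (ϱ : ℕ → AMap V) : Prop :=
  (∀ k, 1 ≤ k → IsArity k (ϱ k) ∧ IsMultilin k (ϱ k) ∧ IsSesq D k (ϱ k)
      ∧ HasDeg G k (-1) (ϱ k)) ∧
  LeibOneIdent G ϱ

/-- The graded Lie bracket `⟦φ,ψ⟧` on `C•_cs`, for `φ` of degree `n` and `ψ` of degree
`m`, arity-`p` component. -/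
def Br (n m : ℤ) (φ ψ : ℕ → AMap V) : ℕ → AMap V := fun p => fun d h a =>
  ∑ k ∈ Finset.Icc 1 p,
    (dia m k (p + 1 - k) (φ k) (ψ (p + 1 - k)) d h a
      - ((Int.negOnePow (m * n)) : ℤ) • dia n (p + 1 - k) k (ψ (p + 1 - k)) (φ k) d h a)

end LCG

namespace LCG
/-- `(ℋ, {ϱ_k})` is a `Leib_∞[1]`-conformal algebra iff `ϱ = Σ_k ϱ_k` is a
Maurer–Cartan element of the graded Lie algebra `(C•_cs(ℋ), ⟦·,·⟧)`, i.e. `⟦ϱ,ϱ⟧ = 0`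
(evaluated on homogeneous arguments). -/
theorem stmt5 (V : Type) [AddCommGroup V] [Module ℂ V]
    (G : ℤ → Submodule ℂ V) (hInt : DirectSum.IsInternal G)
    (D : V →ₗ[ℂ] V) (hD : ∀ (i : ℤ) (x : V), x ∈ G i → D x ∈ G i)
    (ϱ : ℕ → AMap V)
    (hϱ : ∀ k, 1 ≤ k → IsArity k (ϱ k) ∧ IsMultilin k (ϱ k) ∧ IsSesq D k (ϱ k)
      ∧ HasDeg G k (-1) (ϱ k)) :
    LeibOneIdent G ϱ ↔
      (∀ (d : ℕ → ℤ) (h : ℕ → V), (∀ t, h t ∈ G (d t)) → ∀ p, 1 ≤ p → ∀ a,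
        Br (-1) (-1) ϱ ϱ p d h a = 0) := by

  have key : ∀ (d : ℕ → ℤ) (h : ℕ → V) (a : ℕ → ℕ) (p : ℕ),
      Br (-1) (-1) ϱ ϱ p d h a
        = (2 : ℤ) • ∑ k ∈ Finset.Icc 1 p, dia (-1) k (p + 1 - k) (ϱ k) (ϱ (p + 1 - k)) d h a := by
    intro d h a p
    have hsgn : ((Int.negOnePow ((-1 : ℤ) * (-1 : ℤ))) : ℤ) = -1 := by
      norm_num
    have hswap : ∑ k ∈ Finset.Icc 1 p, dia (-1) (p + 1 - k) k (ϱ (p + 1 - k)) (ϱ k) d h a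
        = ∑ k ∈ Finset.Icc 1 p, dia (-1) k (p + 1 - k) (ϱ k) (ϱ (p + 1 - k)) d h a := by
      refine Finset.sum_nbij' (fun k => p + 1 - k) (fun k => p + 1 - k) ?_ ?_ ?_ ?_ ?_
      · intro k hk; simp only [Finset.mem_Icc] at *; omega
      · intro k hk; simp only [Finset.mem_Icc] at *; omega
      · intro k hk; simp only [Finset.mem_Icc] at hk; omega
      · intro k hk; simp only [Finset.mem_Icc] at hk; omega
      · intro k hk
        simp only [Finset.mem_Icc] at hk
        have : p + 1 - (p + 1 - k) = k := by omega
        rw [this]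
    unfold Br
    simp only [hsgn, neg_smul, one_smul, sub_neg_eq_add]
    rw [Finset.sum_add_distrib, hswap, two_smul]
  constructor
  · intro hL d h hG p hp a
    rw [key, hL p hp d h hG a, smul_zero]
  · intro hB n hn d h hG a
    have h2 := hB d h hG n hn a
    rw [key] at h2
    have h2' : (2 : ℂ) • ∑ k ∈ Finset.Icc 1 n, dia (-1) k (n + 1 - k) (ϱ k) (ϱ (n + 1 - k)) d h a = 0 := by
      rw [show ((2 : ℂ) = ((2 : ℤ) : ℂ)) by norm_num, Int.cast_smul_eq_zsmul]
      exact h2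
    rcases smul_eq_zero.mp h2' with h0 | h0
    · norm_num at h0
    · exact h0
end LCG
end
end

section
/- Let (𝒢₁ →0 𝒢₀, ρ₂, ρ₃) be a skeletal 2-term Leib∞-conformal algebra. Then the ℂ[∂]-module 𝒢₁ is a representation of the Leibniz conformal algebra (𝒢₀, [x_λ y] := (ρ₂)_λ(x,y)) with left λ-action x_λ v := (ρ₂)_λ(x,v) and right λ-action v_λ x := (ρ₂)_λ(v,x). -/
noncomputable section

open scoped BigOperators

namespace LCF

variable {M : Type*}

/-- Multiplication by the formal variable `λ` on `M[[λ]]`, where an element of `M[[λ]]`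
is encoded by its sequence of coefficients `ℕ → M`. -/
def lmul [AddCommGroup M] (f : ℕ → M) : ℕ → M
  | 0 => 0
  | n + 1 => f n

/-- Multiplication by `λ` (the first variable) on `M[[λ,μ]]`. -/
def lmul1 [AddCommGroup M] (f : ℕ → ℕ → M) : ℕ → ℕ → M
  | 0 => fun _ => 0
  | m + 1 => f m

/-- Multiplication by `μ` (the second variable) on `M[[λ,μ]]`. -/
def lmul2 [AddCommGroup M] (f : ℕ → ℕ → M) : ℕ → ℕ → M :=
  fun m => lmul (f m)

/-- The coefficient of `λ^m μ^n` in `F(λ+μ)` where `F j r` is the coefficient of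
`λ^j ν^r` in a two-variable expression `F(λ, ν)` which is evaluated at `ν = λ + μ`.
This encodes expressions such as `[[x_λ y]_{λ+μ} z]`. -/
def substSum [AddCommMonoid M] (F : ℕ → ℕ → M) (m n : ℕ) : M :=
  ∑ j ∈ Finset.range (m + 1), ((m - j + n).choose n) • F j (m - j + n)

/-- Three-variable analogue of `substSum`, encoding expressions such as
`[(ρ₃)_{λ,μ}(x,y,z)_{λ+μ+ν} w]`:  coefficient of `λ^a μ^b ν^c`. -/
def substSum3 [AddCommMonoid M] (F : ℕ → ℕ → ℕ → M) (a b c : ℕ) : M :=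
  ∑ j ∈ Finset.range (a + 1), ∑ k ∈ Finset.range (b + 1),
    ((((a - j) + (b - k)).choose (b - k)) * (((a - j) + (b - k) + c).choose c)) •
      F j k ((a - j) + (b - k) + c)

/-- A Leibniz conformal algebra: a `ℂ[∂]`-module `g` (given by a ℂ-module with the
action of `∂` recorded by the linear map `D`) together with a ℂ-bilinear
`λ`-bracket `br : g ⊗ g → g[[λ]]` (given by its coefficients) which is conformal
sesquilinear and satisfies the Leibniz conformal identity
`[x_λ [y_μ z]] = [[x_λ y]_{λ+μ} z] + [y_μ [x_λ z]]` (written coefficientwise). -/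
structure LeibConfAlg (g : Type*) [AddCommGroup g] [Module ℂ g] where
  D : g →ₗ[ℂ] g
  br : g →ₗ[ℂ] g →ₗ[ℂ] (ℕ → g)
  sesqL : ∀ x y, br (D x) y = - lmul (br x y)
  sesqR : ∀ x y, br x (D y) = (fun n => D (br x y n)) + lmul (br x y)
  leib : ∀ x y z m n,
    br x (br y z n) m = substSum (fun j s => br (br x y j) z s) m n + br y (br x z m) n

/-- A representation of a Leibniz conformal algebra: a `ℂ[∂]`-module `M` with left
and right `λ`-actions satisfying the usual compatibility axioms. -/
structure LeibConfRep (g W : Type*) [AddCommGroup g] [Module ℂ g]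
    [AddCommGroup W] [Module ℂ W] (A : LeibConfAlg g) where
  DM : W →ₗ[ℂ] W
  lact : g →ₗ[ℂ] W →ₗ[ℂ] (ℕ → W)
  ract : W →ₗ[ℂ] g →ₗ[ℂ] (ℕ → W)
  sesqLl : ∀ x v, lact (A.D x) v = - lmul (lact x v)
  sesqLr : ∀ x v, lact x (DM v) = (fun n => DM (lact x v n)) + lmul (lact x v)
  sesqRl : ∀ v x, ract (DM v) x = - lmul (ract v x)
  sesqRr : ∀ v x, ract v (A.D x) = (fun n => DM (ract v x n)) + lmul (ract v x)
  rep1 : ∀ x y v m n,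
    lact x (lact y v n) m = substSum (fun j s => lact (A.br x y j) v s) m n + lact y (lact x v m) n
  rep2 : ∀ x v y m n,
    lact x (ract v y n) m = substSum (fun j s => ract (lact x v j) y s) m n + ract v (A.br x y m) n
  rep3 : ∀ v x y m n,
    ract v (A.br x y n) m = substSum (fun j s => ract (ract v x j) y s) m n + lact x (ract v y m) n

/-- A `2`-term `Leib_∞`-conformal algebra `(𝒢₁ →d 𝒢₀, ρ₂, ρ₃)` (Definition 4.1 of the
paper), written in terms of the coefficients of all `λ`-brackets.  The components of
`ρ₂` are `ρ00 : 𝒢₀ ⊗ 𝒢₀ → 𝒢₀[[λ]]`, `ρ01 : 𝒢₀ ⊗ 𝒢₁ → 𝒢₁[[λ]]`, `ρ10 : 𝒢₁ ⊗ 𝒢₀ → 𝒢₁[[λ]]`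
(condition (i) of the definition says that the component of `ρ₂` on `𝒢₁ ⊗ 𝒢₁`
vanishes, so it is not recorded). -/
structure TwoTerm (G0 G1 : Type*) [AddCommGroup G0] [Module ℂ G0]
    [AddCommGroup G1] [Module ℂ G1] where
  D0 : G0 →ₗ[ℂ] G0
  D1 : G1 →ₗ[ℂ] G1
  d : G1 →ₗ[ℂ] G0
  hdD : ∀ v, d (D1 v) = D0 (d v)
  ρ00 : G0 →ₗ[ℂ] G0 →ₗ[ℂ] (ℕ → G0)
  ρ01 : G0 →ₗ[ℂ] G1 →ₗ[ℂ] (ℕ → G1)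
  ρ10 : G1 →ₗ[ℂ] G0 →ₗ[ℂ] (ℕ → G1)
  ρ3 : G0 →ₗ[ℂ] G0 →ₗ[ℂ] G0 →ₗ[ℂ] (ℕ → ℕ → G1)
  sesq00l : ∀ x y, ρ00 (D0 x) y = - lmul (ρ00 x y)
  sesq00r : ∀ x y, ρ00 x (D0 y) = (fun n => D0 (ρ00 x y n)) + lmul (ρ00 x y)
  sesq01l : ∀ x u, ρ01 (D0 x) u = - lmul (ρ01 x u)
  sesq01r : ∀ x u, ρ01 x (D1 u) = (fun n => D1 (ρ01 x u n)) + lmul (ρ01 x u)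
  sesq10l : ∀ u x, ρ10 (D1 u) x = - lmul (ρ10 u x)
  sesq10r : ∀ u x, ρ10 u (D0 x) = (fun n => D1 (ρ10 u x n)) + lmul (ρ10 u x)
  sesq3a : ∀ x y z, ρ3 (D0 x) y z = - lmul1 (ρ3 x y z)
  sesq3b : ∀ x y z, ρ3 x (D0 y) z = - lmul2 (ρ3 x y z)
  sesq3c : ∀ x y z, ρ3 x y (D0 z)
    = (fun m n => D1 (ρ3 x y z m n)) + lmul1 (ρ3 x y z) + lmul2 (ρ3 x y z)
  /-- condition (ii) -/
  c2 : ∀ x u n, d (ρ01 x u n) = ρ00 x (d u) n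
  /-- condition (iii) -/
  c3 : ∀ u x n, d (ρ10 u x n) = ρ00 (d u) x n
  /-- condition (iv) -/
  c4 : ∀ u v, ρ01 (d u) v = ρ10 u (d v)
  /-- condition (v) -/
  c5 : ∀ x y z m n, d (ρ3 x y z m n)
    = ρ00 x (ρ00 y z n) m - substSum (fun j s => ρ00 (ρ00 x y j) z s) m n - ρ00 y (ρ00 x z m) n
  /-- condition (vi) -/
  c6 : ∀ x y v m n, ρ3 x y (d v) m n
    = ρ01 x (ρ01 y v n) m - substSum (fun j s => ρ01 (ρ00 x y j) v s) m n - ρ01 y (ρ01 x v m) n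
  /-- condition (vii) -/
  c7 : ∀ x v y m n, ρ3 x (d v) y m n
    = ρ01 x (ρ10 v y n) m - substSum (fun j s => ρ10 (ρ01 x v j) y s) m n - ρ10 v (ρ00 x y m) n
  /-- condition (viii) -/
  c8 : ∀ v x y m n, ρ3 (d v) x y m n
    = ρ10 v (ρ00 x y n) m - substSum (fun j s => ρ10 (ρ10 v x j) y s) m n - ρ01 x (ρ10 v y m) n
  /-- condition (ix): the conformal Leibnizator identity -/
  c9 : ∀ x y z w a b c,
    ρ01 x (ρ3 y z w b c) a - ρ01 y (ρ3 x z w a c) b + ρ01 z (ρ3 x y w a b) c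
      + substSum3 (fun j k r => ρ10 (ρ3 x y z j k) w r) a b c
      - substSum (fun j r => ρ3 (ρ00 x y j) z w r c) a b
      - substSum (fun j r => ρ3 y (ρ00 x z j) w b r) a c
      - ρ3 y z (ρ00 x w a) b c
      + substSum (fun j r => ρ3 x (ρ00 y z j) w a r) b c
      + ρ3 x z (ρ00 y w b) a c
      - ρ3 x y (ρ00 z w c) a b = 0

end LCF

namespace LCF
/-- For a skeletal `2`-term `Leib_∞`-conformal algebra, `𝒢₁` is a representation of
the Leibniz conformal algebra `𝒢₀` with left action `x_λ v := (ρ₂)_λ(x,v)` and right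
action `v_λ x := (ρ₂)_λ(v,x)`. -/
theorem stmt10 {G0 G1 : Type*} [AddCommGroup G0] [Module ℂ G0]
    [AddCommGroup G1] [Module ℂ G1] (T : TwoTerm G0 G1) (hskel : T.d = 0) :
    ∃ (L : LeibConfAlg G0) (R : LeibConfRep G0 G1 L),
      L.D = T.D0 ∧ L.br = T.ρ00 ∧ R.DM = T.D1 ∧ R.lact = T.ρ01 ∧ R.ract = T.ρ10 := by
  refine ⟨⟨T.D0, T.ρ00, T.sesq00l, T.sesq00r, ?_⟩,
    ⟨T.D1, T.ρ01, T.ρ10, T.sesq01l, T.sesq01r, T.sesq10l, T.sesq10r, ?_, ?_, ?_⟩,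
    rfl, rfl, rfl, rfl, rfl⟩
  · intro x y z m n
    have h := T.c5 x y z m n
    rw [hskel] at h
    simp only [LinearMap.zero_apply] at h
    have h2 := sub_eq_zero.mp h.symm
    rw [sub_eq_iff_eq_add, add_comm] at h2
    exact h2
  · intro x y v m n
    have h := T.c6 x y v m n
    rw [hskel] at h
    simp only [LinearMap.zero_apply, map_zero, Pi.zero_apply] at h
    have h2 := sub_eq_zero.mp h.symm
    rw [sub_eq_iff_eq_add, add_comm] at h2
    exact h2
  · intro x v y m n
    have h := T.c7 x v y m n
    rw [hskel] at h
    simp only [LinearMap.zero_apply, map_zero, LinearMap.map_zero₂, Pi.zero_apply] at h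
    have h2 := sub_eq_zero.mp h.symm
    rw [sub_eq_iff_eq_add, add_comm] at h2
    exact h2
  · intro v x y m n
    have h := T.c8 v x y m n
    rw [hskel] at h
    simp only [LinearMap.zero_apply, map_zero, LinearMap.map_zero₂, Pi.zero_apply] at h
    have h2 := sub_eq_zero.mp h.symm
    rw [sub_eq_iff_eq_add, add_comm] at h2
    exact h2
end LCF
end
end

section
/- Let 𝔤 be a Leibniz conformal algebra, M a representation of 𝔤, and θ : 𝔤 ⊗ 𝔤 ⊗ 𝔤 → M[[λ,μ]] a ℂ-linear conformal sesquilinear 3-cocycle of 𝔤 with coefficients in M (i.e. δθ = 0 for the Leibniz conformal coboundary). Then (M →0 𝔤, ρ₂, θ), with (ρ₂)_λ(x,y) := [x_λ y], (ρ₂)_λ(x,v) := x_λ v, (ρ₂)_λ(v,x) := v_λ x for x,y ∈ 𝔤, v ∈ M, is a skeletal 2-term Leib∞-conformal algebra. -/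
noncomputable section

open scoped BigOperators

namespace LCF
/-- Given a Leibniz conformal algebra `g`, a representation `W` and a conformal
sesquilinear `3`-cocycle `θ : g⊗g⊗g → W[[λ,μ]]` (the cocycle condition `δθ = 0`
being exactly the conformal Leibnizator identity), `(W →0 g, ρ₂, θ)` is a skeletal
`2`-term `Leib_∞`-conformal algebra. -/
theorem stmt11 {g W : Type*} [AddCommGroup g] [Module ℂ g] [AddCommGroup W] [Module ℂ W]
    (A : LeibConfAlg g) (R : LeibConfRep g W A)
    (θ : g →ₗ[ℂ] g →ₗ[ℂ] g →ₗ[ℂ] (ℕ → ℕ → W))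
    (hθ1 : ∀ x y z, θ (A.D x) y z = - lmul1 (θ x y z))
    (hθ2 : ∀ x y z, θ x (A.D y) z = - lmul2 (θ x y z))
    (hθ3 : ∀ x y z, θ x y (A.D z)
      = (fun m n => R.DM (θ x y z m n)) + lmul1 (θ x y z) + lmul2 (θ x y z))
    -- the 3-cocycle condition `δθ = 0`:
    (hcocycle : ∀ x y z w a b c,
      R.lact x (θ y z w b c) a - R.lact y (θ x z w a c) b + R.lact z (θ x y w a b) c
        + substSum3 (fun j k r => R.ract (θ x y z j k) w r) a b c
        - substSum (fun j r => θ (A.br x y j) z w r c) a b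
        - substSum (fun j r => θ y (A.br x z j) w b r) a c
        - θ y z (A.br x w a) b c
        + substSum (fun j r => θ x (A.br y z j) w a r) b c
        + θ x z (A.br y w b) a c
        - θ x y (A.br z w c) a b = 0) :
    ∃ T : TwoTerm g W, T.d = 0 ∧ T.D0 = A.D ∧ T.D1 = R.DM ∧
      T.ρ00 = A.br ∧ T.ρ01 = R.lact ∧ T.ρ10 = R.ract ∧ T.ρ3 = θ := by
  refine ⟨{ D0 := A.D
            D1 := R.DM
            d := 0
            hdD := fun v => by simp
            ρ00 := A.br
            ρ01 := R.lact
            ρ10 := R.ract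
            ρ3 := θ
            sesq00l := A.sesqL
            sesq00r := A.sesqR
            sesq01l := R.sesqLl
            sesq01r := R.sesqLr
            sesq10l := R.sesqRl
            sesq10r := R.sesqRr
            sesq3a := hθ1
            sesq3b := hθ2
            sesq3c := hθ3
            c2 := fun x u n => by simp
            c3 := fun u x n => by simp
            c4 := fun u v => by simp
            c5 := fun x y z m n => by
              simp only [LinearMap.zero_apply, Pi.zero_apply]
              rw [A.leib x y z m n]; abel
            c6 := fun x y v m n => by
              simp only [LinearMap.zero_apply, map_zero, Pi.zero_apply]
              rw [R.rep1 x y v m n]; abel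
            c7 := fun x v y m n => by
              simp only [LinearMap.zero_apply, map_zero, LinearMap.map_zero₂, Pi.zero_apply]
              rw [R.rep2 x v y m n]; abel
            c8 := fun v x y m n => by
              simp only [LinearMap.zero_apply, map_zero, LinearMap.map_zero₂, Pi.zero_apply]
              rw [R.rep3 v x y m n]; abel
            c9 := hcocycle }, rfl, rfl, rfl, rfl, rfl, rfl, rfl⟩
end LCF
end
end

section
/- Let 𝔤 be a Leibniz conformal algebra, M a representation of 𝔤, and τ : 𝔤 ⊗ 𝔤 → M[[λ]] any ℂ-linear conformal sesquilinear map. Then (M →0 𝔤, ρ₂, δτ) is a skeletal 2-term Leib∞-conformal algebra, where (ρ₂)_λ(x,y) := [x_λ y], (ρ₂)_λ(x,v) := x_λ v, (ρ₂)_λ(v,x) := v_λ x, and δ is the Leibniz conformal coboundary; in particular δτ is a 3-cocycle and satisfies the conformal Leibnizator identity. -/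
noncomputable section

open scoped BigOperators

namespace LCF
/-- The Leibniz conformal coboundary of a conformal sesquilinear 2-cochain
`τ : g ⊗ g → W[[λ]]`, written coefficientwise:
`(δτ)_{λ,μ}(x,y,z) = x_λ(τ_μ(y,z)) − y_μ(τ_λ(x,z)) − (τ_λ(x,y))_{λ+μ} z
  − τ_{λ+μ}([x_λ y],z) − τ_μ(y,[x_λ z]) + τ_λ(x,[y_μ z])`. -/
def cobound2 {g W : Type*} [AddCommGroup g] [Module ℂ g] [AddCommGroup W] [Module ℂ W]
    (A : LeibConfAlg g) (R : LeibConfRep g W A) (τ : g →ₗ[ℂ] g →ₗ[ℂ] (ℕ → W))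
    (x y z : g) (a b : ℕ) : W :=
  R.lact x (τ y z b) a - R.lact y (τ x z a) b
    - substSum (fun j s => R.ract (τ x y j) z s) a b
    - substSum (fun j s => τ (A.br x y j) z s) a b
    - τ y (A.br x z a) b + τ x (A.br y z b) a

section Aux

variable {M N : Type*}

section Mon
variable [AddCommMonoid M] [AddCommMonoid N]

lemma substSum_zero_left (F : ℕ → ℕ → M) (n : ℕ) : substSum F 0 n = F 0 n := by
  simp [substSum]

lemma substSum_add (F G : ℕ → ℕ → M) (m n : ℕ) :
    substSum (fun j s => F j s + G j s) m n = substSum F m n + substSum G m n := by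
  simp [substSum, Finset.sum_add_distrib, smul_add]

lemma substSum3_add (F G : ℕ → ℕ → ℕ → M) (a b c : ℕ) :
    substSum3 (fun j k r => F j k r + G j k r) a b c = substSum3 F a b c + substSum3 G a b c := by
  simp [substSum3, Finset.sum_add_distrib, smul_add]

lemma map_substSum (φ : M →+ N) (F : ℕ → ℕ → M) (m n : ℕ) :
    φ (substSum F m n) = substSum (fun j s => φ (F j s)) m n := by
  simp [substSum, map_sum, map_nsmul]

lemma map_substSum3 (φ : M →+ N) (F : ℕ → ℕ → ℕ → M) (a b c : ℕ) :
    φ (substSum3 F a b c) = substSum3 (fun j k r => φ (F j k r)) a b c := by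
  simp [substSum3, map_sum, map_nsmul]

lemma substSum_smulc [Module ℂ M] (r : ℂ) (F : ℕ → ℕ → M) (m n : ℕ) :
    substSum (fun j s => r • F j s) m n = r • substSum F m n := by
  unfold substSum
  rw [Finset.smul_sum]
  exact Finset.sum_congr rfl fun j _ => smul_comm _ _ _

lemma trinom1 (p q c : ℕ) :
    (q + c).choose c * (p + (q + c)).choose (q + c) = (p + q).choose q * (p + q + c).choose c := by
  have h := Nat.choose_mul (n := p + q + c) (k := q + c) (s := c) (by omega)
  have h1 : p + q + c - c = p + q := by omega
  have h2 : q + c - c = q := by omega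
  rw [h1, h2] at h
  have h3 : p + (q + c) = p + q + c := by omega
  rw [h3]
  calc (q + c).choose c * (p + q + c).choose (q + c)
      = (p + q + c).choose (q + c) * (q + c).choose c := mul_comm _ _
    _ = (p + q + c).choose c * (p + q).choose q := h
    _ = (p + q).choose q * (p + q + c).choose c := mul_comm _ _

lemma trinom2 (p q c : ℕ) :
    (p + c).choose c * (q + (p + c)).choose (p + c) = (p + q).choose q * (p + q + c).choose c := by
  have h := Nat.choose_mul (n := p + q + c) (k := p + c) (s := c) (by omega)
  have h1 : p + q + c - c = p + q := by omega
  have h2 : p + c - c = p := by omega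
  rw [h1, h2] at h
  have h3 : q + (p + c) = p + q + c := by omega
  have h4 : (p + q).choose p = (p + q).choose q := by
    rw [← Nat.choose_symm (by omega : p ≤ p + q)]
    congr 1
    omega
  rw [h3]
  calc (p + c).choose c * (p + q + c).choose (p + c)
      = (p + q + c).choose (p + c) * (p + c).choose c := mul_comm _ _
    _ = (p + q + c).choose c * (p + q).choose p := h
    _ = (p + q).choose q * (p + q + c).choose c := by rw [h4, mul_comm]

lemma k1 (H : ℕ → ℕ → ℕ → M) (a b c : ℕ) :
    substSum (fun k s => substSum (fun j u => H j k u) a s) b c = substSum3 H a b c := by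
  unfold substSum substSum3
  simp only [Finset.smul_sum, smul_smul]
  rw [Finset.sum_comm]
  refine Finset.sum_congr rfl fun j hj => Finset.sum_congr rfl fun k hk => ?_
  rw [trinom1 (a - j) (b - k) c, show a - j + (b - k + c) = a - j + (b - k) + c from by omega]

lemma k2 (H : ℕ → ℕ → ℕ → M) (a b c : ℕ) :
    substSum (fun k s => substSum (fun j u => H k j u) b s) a c = substSum3 H a b c := by
  unfold substSum substSum3
  simp only [Finset.smul_sum, smul_smul]
  refine Finset.sum_congr rfl fun k hk => Finset.sum_congr rfl fun j hj => ?_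
  rw [trinom2 (a - k) (b - j) c, show b - j + (a - k + c) = a - k + (b - j) + c from by omega]

lemma tri (n : ℕ) (f : ℕ → ℕ → M) :
    ∑ j ∈ Finset.range (n + 1), ∑ i ∈ Finset.range (j + 1), f j i
      = ∑ i ∈ Finset.range (n + 1), ∑ u ∈ Finset.range (n - i + 1), f (i + u) i := by
  induction n with
  | zero => simp
  | succ n ih =>
    have e1 : ∀ i ∈ Finset.range (n + 1),
        ∑ u ∈ Finset.range (n + 1 - i + 1), f (i + u) i
          = ∑ u ∈ Finset.range (n - i + 1), f (i + u) i + f (n + 1) i := by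
      intro i hi
      simp only [Finset.mem_range] at hi
      rw [show n + 1 - i + 1 = (n - i + 1) + 1 from by omega, Finset.sum_range_succ,
        show i + (n - i + 1) = n + 1 from by omega]
    have e2 : ∑ i ∈ Finset.range (n + 1 + 1), ∑ u ∈ Finset.range (n + 1 - i + 1), f (i + u) i
        = ∑ i ∈ Finset.range (n + 1),
            (∑ u ∈ Finset.range (n - i + 1), f (i + u) i + f (n + 1) i) + f (n + 1) (n + 1) := by
      rw [Finset.sum_range_succ]
      congr 1
      · exact Finset.sum_congr rfl e1
      · rw [show n + 1 - (n + 1) + 1 = 1 from by omega, Finset.sum_range_one]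
    rw [Finset.sum_range_succ, ih, e2, Finset.sum_add_distrib,
      Finset.sum_range_succ (f := fun i => f (n + 1) i) (n := n + 1)]
    abel

lemma vdm (m j b : ℕ) :
    ∑ k ∈ Finset.range (b + 1), m.choose (b - k) * j.choose k = (m + j).choose b := by
  rw [show m + j = j + m from Nat.add_comm m j, Nat.add_choose_eq j m b,
    Finset.Nat.sum_antidiagonal_eq_sum_range_succ_mk]
  exact Finset.sum_congr rfl fun k _ => mul_comm _ _

lemma rect (H : ℕ → ℕ → M) (A b c : ℕ) :
    ∑ k ∈ Finset.range (b + 1), ∑ u ∈ Finset.range (A + 1),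
      ((A - u + (b - k)).choose (b - k) * ((A - u + (b - k) + c).choose c) * ((u + k).choose k))
        • H (u + k) (A - u + (b - k) + c)
    = ∑ j ∈ Finset.range (A + b + 1),
        ((A + b).choose b * ((A + b - j + c).choose c)) • H j (A + b - j + c) := by
  have step1 : ∀ k ∈ Finset.range (b + 1),
      ∑ u ∈ Finset.range (A + 1),
        ((A - u + (b - k)).choose (b - k) * ((A - u + (b - k) + c).choose c) * ((u + k).choose k))
          • H (u + k) (A - u + (b - k) + c)
      = ∑ j ∈ Finset.range (A + b + 1),
          ((A + b - j).choose (b - k) * ((A + b - j + c).choose c) * (j.choose k))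
            • H j (A + b - j + c) := by
    intro k hk
    simp only [Finset.mem_range] at hk
    calc ∑ u ∈ Finset.range (A + 1),
          ((A - u + (b - k)).choose (b - k) * ((A - u + (b - k) + c).choose c)
            * ((u + k).choose k)) • H (u + k) (A - u + (b - k) + c)
        = ∑ u ∈ Finset.range (A + 1),
            ((A + b - (u + k)).choose (b - k) * ((A + b - (u + k) + c).choose c)
              * ((u + k).choose k)) • H (u + k) (A + b - (u + k) + c) := by
          refine Finset.sum_congr rfl fun u hu => ?_
          simp only [Finset.mem_range] at hu
          rw [show A - u + (b - k) = A + b - (u + k) from by omega]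
      _ = ∑ u ∈ Finset.range (A + b - k + 1),
            ((A + b - (u + k)).choose (b - k) * ((A + b - (u + k) + c).choose c)
              * ((u + k).choose k)) • H (u + k) (A + b - (u + k) + c) := by
          refine Finset.sum_subset (Finset.range_subset_range.2 (by omega : A + 1 ≤ A + b - k + 1)) ?_
          intro u hu hnu
          simp only [Finset.mem_range] at hu hnu
          rw [Nat.choose_eq_zero_of_lt (show A + b - (u + k) < b - k by omega)]
          simp
      _ = ∑ j ∈ (Finset.range (A + b + 1)).filter (fun j => k ≤ j),
            ((A + b - j).choose (b - k) * ((A + b - j + c).choose c) * (j.choose k))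
              • H j (A + b - j + c) := by
          refine Finset.sum_nbij' (i := fun u => u + k) (j := fun v => v - k) ?_ ?_ ?_ ?_ ?_
          · intro u hu
            simp only [Finset.mem_range] at hu
            simp only [Finset.mem_filter, Finset.mem_range]
            omega
          · intro v hv
            simp only [Finset.mem_filter, Finset.mem_range] at hv
            simp only [Finset.mem_range]
            omega
          · intro u _; show u + k - k = u; omega
          · intro v hv
            simp only [Finset.mem_filter, Finset.mem_range] at hv
            show v - k + k = v
            omega
          · intro u _; rfl
      _ = ∑ j ∈ Finset.range (A + b + 1),
            ((A + b - j).choose (b - k) * ((A + b - j + c).choose c) * (j.choose k))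
              • H j (A + b - j + c) := by
          refine Finset.sum_filter_of_ne ?_
          intro j hj hne
          by_contra hlt
          apply hne
          rw [Nat.choose_eq_zero_of_lt (show j < k by omega)]
          simp
  calc ∑ k ∈ Finset.range (b + 1), ∑ u ∈ Finset.range (A + 1),
        ((A - u + (b - k)).choose (b - k) * ((A - u + (b - k) + c).choose c)
          * ((u + k).choose k)) • H (u + k) (A - u + (b - k) + c)
      = ∑ k ∈ Finset.range (b + 1), ∑ j ∈ Finset.range (A + b + 1),
          ((A + b - j).choose (b - k) * ((A + b - j + c).choose c) * (j.choose k))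
            • H j (A + b - j + c) := Finset.sum_congr rfl step1
    _ = ∑ j ∈ Finset.range (A + b + 1), ∑ k ∈ Finset.range (b + 1),
          ((A + b - j).choose (b - k) * ((A + b - j + c).choose c) * (j.choose k))
            • H j (A + b - j + c) := Finset.sum_comm
    _ = ∑ j ∈ Finset.range (A + b + 1),
          ((A + b).choose b * ((A + b - j + c).choose c)) • H j (A + b - j + c) := by
        refine Finset.sum_congr rfl fun j hj => ?_
        simp only [Finset.mem_range] at hj
        rw [← Finset.sum_smul]
        congr 1
        calc ∑ k ∈ Finset.range (b + 1),
              (A + b - j).choose (b - k) * ((A + b - j + c).choose c) * (j.choose k)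
            = (∑ k ∈ Finset.range (b + 1), (A + b - j).choose (b - k) * (j.choose k))
                * ((A + b - j + c).choose c) := by
              rw [Finset.sum_mul]
              exact Finset.sum_congr rfl fun k _ => by ring
          _ = (A + b).choose b * ((A + b - j + c).choose c) := by
              rw [vdm, show A + b - j + j = A + b from by omega]

lemma k3 (H : ℕ → ℕ → ℕ → M) (a b c : ℕ) :
    substSum (fun i s => substSum (fun j u => H i j u) s c) a b
      = substSum3 (fun j k r => substSum (fun i u => H i u r) j k) a b c := by
  have hL : substSum (fun i s => substSum (fun j u => H i j u) s c) a b
      = ∑ i ∈ Finset.range (a + 1), ∑ j ∈ Finset.range (a - i + b + 1),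
          ((a - i + b).choose b * ((a - i + b - j + c).choose c)) • H i j (a - i + b - j + c) := by
    unfold substSum
    simp only [Finset.smul_sum, smul_smul]
  have hR : substSum3 (fun j k r => substSum (fun i u => H i u r) j k) a b c
      = ∑ i ∈ Finset.range (a + 1), ∑ u ∈ Finset.range (a - i + 1), ∑ k ∈ Finset.range (b + 1),
          ((a - i - u + (b - k)).choose (b - k) * ((a - i - u + (b - k) + c).choose c)
            * ((u + k).choose k)) • H i (u + k) (a - i - u + (b - k) + c) := by
    unfold substSum3 substSum
    calc ∑ j ∈ Finset.range (a + 1), ∑ k ∈ Finset.range (b + 1),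
          ((a - j + (b - k)).choose (b - k) * ((a - j + (b - k) + c).choose c)) •
            ∑ i ∈ Finset.range (j + 1), ((j - i + k).choose k) • H i (j - i + k) (a - j + (b - k) + c)
        = ∑ j ∈ Finset.range (a + 1), ∑ i ∈ Finset.range (j + 1), ∑ k ∈ Finset.range (b + 1),
            ((a - j + (b - k)).choose (b - k) * ((a - j + (b - k) + c).choose c)
              * ((j - i + k).choose k)) • H i (j - i + k) (a - j + (b - k) + c) := by
          refine Finset.sum_congr rfl fun j _ => ?_
          have hpush : ∀ k ∈ Finset.range (b + 1),
              ((a - j + (b - k)).choose (b - k) * ((a - j + (b - k) + c).choose c)) •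
                ∑ i ∈ Finset.range (j + 1),
                  ((j - i + k).choose k) • H i (j - i + k) (a - j + (b - k) + c)
              = ∑ i ∈ Finset.range (j + 1),
                  ((a - j + (b - k)).choose (b - k) * ((a - j + (b - k) + c).choose c)
                    * ((j - i + k).choose k)) • H i (j - i + k) (a - j + (b - k) + c) := by
            intro k _
            rw [Finset.smul_sum]
            exact Finset.sum_congr rfl fun i _ => smul_smul _ _ _
          exact (Finset.sum_congr rfl hpush).trans Finset.sum_comm
      _ = ∑ i ∈ Finset.range (a + 1), ∑ u ∈ Finset.range (a - i + 1), ∑ k ∈ Finset.range (b + 1),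
            ((a - (i + u) + (b - k)).choose (b - k) * ((a - (i + u) + (b - k) + c).choose c)
              * ((i + u - i + k).choose k)) • H i (i + u - i + k) (a - (i + u) + (b - k) + c) :=
          tri a (fun j i => ∑ k ∈ Finset.range (b + 1),
            ((a - j + (b - k)).choose (b - k) * ((a - j + (b - k) + c).choose c)
              * ((j - i + k).choose k)) • H i (j - i + k) (a - j + (b - k) + c))
      _ = ∑ i ∈ Finset.range (a + 1), ∑ u ∈ Finset.range (a - i + 1), ∑ k ∈ Finset.range (b + 1),
            ((a - i - u + (b - k)).choose (b - k) * ((a - i - u + (b - k) + c).choose c)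
              * ((u + k).choose k)) • H i (u + k) (a - i - u + (b - k) + c) := by
          refine Finset.sum_congr rfl fun i hi => Finset.sum_congr rfl fun u hu =>
            Finset.sum_congr rfl fun k _ => ?_
          simp only [Finset.mem_range] at hi hu
          rw [show i + u - i + k = u + k from by omega,
            show a - (i + u) = a - i - u from by omega]
  rw [hL, hR]
  refine Finset.sum_congr rfl fun i _ => ?_
  rw [← rect (fun p q => H i p q) (a - i) b c]
  exact Finset.sum_comm

end Mon

section Grp
variable [AddCommGroup M] [AddCommGroup N]


lemma lmul_zero (f : ℕ → M) : lmul f 0 = 0 := rfl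

lemma lmul_succ (f : ℕ → M) (n : ℕ) : lmul f (n + 1) = f n := rfl

lemma lmul1_zero (F : ℕ → ℕ → M) (q : ℕ) : lmul1 F 0 q = 0 := rfl

lemma lmul1_succ (F : ℕ → ℕ → M) (p q : ℕ) : lmul1 F (p + 1) q = F p q := rfl

lemma lmul2_zero (F : ℕ → ℕ → M) (p : ℕ) : lmul2 F p 0 = 0 := rfl

lemma lmul2_succ (F : ℕ → ℕ → M) (p q : ℕ) : lmul2 F p (q + 1) = F p q := rfl

lemma substSum_neg (F : ℕ → ℕ → M) (m n : ℕ) :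
    substSum (fun j s => -F j s) m n = -substSum F m n := by
  simp [substSum, smul_neg, Finset.sum_neg_distrib]

lemma substSum_sub (F G : ℕ → ℕ → M) (m n : ℕ) :
    substSum (fun j s => F j s - G j s) m n = substSum F m n - substSum G m n := by
  simp [substSum, smul_sub, Finset.sum_sub_distrib]

lemma substSum3_sub (F G : ℕ → ℕ → ℕ → M) (a b c : ℕ) :
    substSum3 (fun j k r => F j k r - G j k r) a b c
      = substSum3 F a b c - substSum3 G a b c := by
  simp [substSum3, smul_sub, Finset.sum_sub_distrib]

lemma substSum_lmul1 (G : ℕ → ℕ → M) (m n : ℕ) :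
    substSum (fun j s => lmul1 G j s) m n = lmul1 (fun p q => substSum G p q) m n := by
  cases m with
  | zero => simp [substSum, lmul1]
  | succ m =>
    show _ = substSum G m n
    unfold substSum
    rw [Finset.sum_range_succ']
    simp [lmul1, Nat.succ_sub_succ]

lemma substSum_lmul2 (G : ℕ → ℕ → M) (m n : ℕ) :
    substSum (fun j s => lmul (G j) s) m n
      = lmul1 (fun p q => substSum G p q) m n + lmul (substSum G m) n := by
  cases n with
  | zero =>
    cases m with
    | zero => simp [substSum, lmul, lmul1]
    | succ m =>
      show _ = substSum G m 0 + lmul (substSum G (m + 1)) 0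
      have hz : lmul (substSum G (m + 1)) 0 = (0 : M) := rfl
      rw [hz, add_zero]
      unfold substSum
      rw [Finset.sum_range_succ]
      have hlast : ((m + 1 - (m + 1) + 0).choose 0) • lmul (G (m + 1)) (m + 1 - (m + 1) + 0)
          = (0 : M) := by
        rw [show m + 1 - (m + 1) + 0 = 0 from by omega]
        simp [lmul]
      rw [hlast, add_zero]
      refine Finset.sum_congr rfl fun j hj => ?_
      simp only [Finset.mem_range] at hj
      rw [show m + 1 - j + 0 = (m - j + 0) + 1 from by omega]
      simp [lmul]
  | succ n =>
    have hsplit : ∀ j, ((m - j + (n + 1)).choose (n + 1)) • lmul (G j) (m - j + (n + 1))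
        = ((m - j + n).choose n) • G j (m - j + n)
          + ((m - j + n).choose (n + 1)) • G j (m - j + n) := by
      intro j
      have e : m - j + (n + 1) = (m - j + n) + 1 := rfl
      rw [e, Nat.choose_succ_succ, add_smul]
      rfl
    have h1 : substSum (fun j s => lmul (G j) s) m (n + 1)
        = substSum G m n
          + ∑ j ∈ Finset.range (m + 1), ((m - j + n).choose (n + 1)) • G j (m - j + n) := by
      unfold substSum
      rw [Finset.sum_congr rfl fun j _ => hsplit j, Finset.sum_add_distrib]
    have h2 : ∑ j ∈ Finset.range (m + 1), ((m - j + n).choose (n + 1)) • G j (m - j + n)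
        = lmul1 (fun p q => substSum G p q) m (n + 1) := by
      cases m with
      | zero => simp [lmul1, Nat.choose_succ_self]
      | succ m =>
        show _ = substSum G m (n + 1)
        rw [Finset.sum_range_succ]
        have hlast : ((m + 1 - (m + 1) + n).choose (n + 1)) • G (m + 1) (m + 1 - (m + 1) + n)
            = (0 : M) := by
          rw [show m + 1 - (m + 1) + n = n from by omega, Nat.choose_succ_self]
          simp
        rw [hlast, add_zero]
        unfold substSum
        refine Finset.sum_congr rfl fun j hj => ?_
        simp only [Finset.mem_range] at hj
        rw [show m + 1 - j + n = m - j + (n + 1) from by omega]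
    rw [h1, h2]
    have hl : lmul (substSum G m) (n + 1) = substSum G m n := rfl
    rw [hl, add_comm]

end Grp

end Aux

section Build

variable {g W : Type*} [AddCommGroup g] [Module ℂ g] [AddCommGroup W] [Module ℂ W]
variable (A : LeibConfAlg g) (R : LeibConfRep g W A) (τ : g →ₗ[ℂ] g →ₗ[ℂ] (ℕ → W))

lemma lact_substSum (x : g) (i : ℕ) (F : ℕ → ℕ → W) (m n : ℕ) :
    R.lact x (substSum F m n) i = substSum (fun j s => R.lact x (F j s) i) m n :=
  map_substSum (AddMonoidHom.mk' (fun v => R.lact x v i)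
    (fun u v => by simp [map_add])) F m n

lemma ract_substSum (z : g) (i : ℕ) (F : ℕ → ℕ → W) (m n : ℕ) :
    R.ract (substSum F m n) z i = substSum (fun j s => R.ract (F j s) z i) m n :=
  map_substSum (AddMonoidHom.mk' (fun v => R.ract v z i)
    (fun u v => by simp [map_add])) F m n

lemma tau1_substSum (z : g) (i : ℕ) (F : ℕ → ℕ → g) (m n : ℕ) :
    τ (substSum F m n) z i = substSum (fun j s => τ (F j s) z i) m n :=
  map_substSum (AddMonoidHom.mk' (fun u => τ u z i)
    (fun u v => by simp [map_add])) F m n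

lemma tau2_substSum (y : g) (i : ℕ) (F : ℕ → ℕ → g) (m n : ℕ) :
    τ y (substSum F m n) i = substSum (fun j s => τ y (F j s) i) m n :=
  map_substSum (AddMonoidHom.mk' (fun u => τ y u i)
    (fun u v => by simp [map_add])) F m n

lemma DM_substSum (F : ℕ → ℕ → W) (m n : ℕ) :
    substSum (fun j s => R.DM (F j s)) m n = R.DM (substSum F m n) :=
  (map_substSum R.DM.toAddMonoidHom F m n).symm

lemma cobound2_add1 (x x' y z : g) (a b : ℕ) :
    cobound2 A R τ (x + x') y z a b
      = cobound2 A R τ x y z a b + cobound2 A R τ x' y z a b := by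
  simp only [cobound2, map_add, LinearMap.add_apply, Pi.add_apply, substSum_add]
  abel

lemma cobound2_add2 (x y y' z : g) (a b : ℕ) :
    cobound2 A R τ x (y + y') z a b
      = cobound2 A R τ x y z a b + cobound2 A R τ x y' z a b := by
  simp only [cobound2, map_add, LinearMap.add_apply, Pi.add_apply, substSum_add]
  abel

lemma cobound2_add3 (x y z z' : g) (a b : ℕ) :
    cobound2 A R τ x y (z + z') a b
      = cobound2 A R τ x y z a b + cobound2 A R τ x y z' a b := by
  simp only [cobound2, map_add, LinearMap.add_apply, Pi.add_apply, substSum_add]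
  abel

lemma cobound2_smul1 (r : ℂ) (x y z : g) (a b : ℕ) :
    cobound2 A R τ (r • x) y z a b = r • cobound2 A R τ x y z a b := by
  simp only [cobound2, map_smul, LinearMap.smul_apply, Pi.smul_apply, substSum_smulc]
  module

lemma cobound2_smul2 (r : ℂ) (x y z : g) (a b : ℕ) :
    cobound2 A R τ x (r • y) z a b = r • cobound2 A R τ x y z a b := by
  simp only [cobound2, map_smul, LinearMap.smul_apply, Pi.smul_apply, substSum_smulc]
  module

lemma cobound2_smul3 (r : ℂ) (x y z : g) (a b : ℕ) :
    cobound2 A R τ x y (r • z) a b = r • cobound2 A R τ x y z a b := by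
  simp only [cobound2, map_smul, LinearMap.smul_apply, Pi.smul_apply, substSum_smulc]
  module

def rho3 : g →ₗ[ℂ] g →ₗ[ℂ] g →ₗ[ℂ] (ℕ → ℕ → W) where
  toFun x :=
    { toFun := fun y =>
        { toFun := fun z => fun a b => cobound2 A R τ x y z a b
          map_add' := fun z z' => by
            funext a b
            exact cobound2_add3 A R τ x y z z' a b
          map_smul' := fun r z => by
            funext a b
            exact cobound2_smul3 A R τ r x y z a b }
      map_add' := fun y y' => by
        refine LinearMap.ext fun z => ?_
        funext a b
        exact cobound2_add2 A R τ x y y' z a b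
      map_smul' := fun r y => by
        refine LinearMap.ext fun z => ?_
        funext a b
        exact cobound2_smul2 A R τ r x y z a b }
  map_add' := fun x x' => by
    refine LinearMap.ext fun y => ?_
    refine LinearMap.ext fun z => ?_
    funext a b
    exact cobound2_add1 A R τ x x' y z a b
  map_smul' := fun r x => by
    refine LinearMap.ext fun y => ?_
    refine LinearMap.ext fun z => ?_
    funext a b
    exact cobound2_smul1 A R τ r x y z a b

lemma rho3_apply (x y z : g) (a b : ℕ) :
    rho3 A R τ x y z a b = cobound2 A R τ x y z a b := rfl

end Build

section Cocycle

variable {g W : Type*} [AddCommGroup g] [Module ℂ g] [AddCommGroup W] [Module ℂ W]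
variable (A : LeibConfAlg g) (R : LeibConfRep g W A) (τ : g →ₗ[ℂ] g →ₗ[ℂ] (ℕ → W))

theorem cocycle (x y z w : g) (a b c : ℕ) :
    R.lact x (cobound2 A R τ y z w b c) a - R.lact y (cobound2 A R τ x z w a c) b
      + R.lact z (cobound2 A R τ x y w a b) c
      + substSum3 (fun j k r => R.ract (cobound2 A R τ x y z j k) w r) a b c
      - substSum (fun j r => cobound2 A R τ (A.br x y j) z w r c) a b
      - substSum (fun j r => cobound2 A R τ y (A.br x z j) w b r) a c
      - cobound2 A R τ y z (A.br x w a) b c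
      + substSum (fun j r => cobound2 A R τ x (A.br y z j) w a r) b c
      + cobound2 A R τ x z (A.br y w b) a c
      - cobound2 A R τ x y (A.br z w c) a b = 0 := by
  have hE1 : R.lact x (cobound2 A R τ y z w b c) a
      = R.lact x (R.lact y (τ z w c) b) a
        - R.lact x (R.lact z (τ y w b) c) a
        - substSum3 (fun j k r => R.ract (R.lact x (τ y z k) j) w r) a b c
        - substSum (fun j s => R.ract (τ y z j) (A.br x w a) s) b c
        - substSum (fun j s => R.lact x (τ (A.br y z j) w s) a) b c
        - R.lact x (τ z (A.br y w b) c) a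
        + R.lact x (τ y (A.br z w c) b) a := by
    simp only [cobound2, map_sub, map_add, Pi.sub_apply, Pi.add_apply]
    rw [lact_substSum A R x a (fun j s => R.ract (τ y z j) w s) b c,
        lact_substSum A R x a (fun j s => τ (A.br y z j) w s) b c]
    have step : (fun j s => R.lact x (R.ract (τ y z j) w s) a)
        = fun j s => substSum (fun i u => R.ract (R.lact x (τ y z j) i) w u) a s
            + R.ract (τ y z j) (A.br x w a) s := by
      funext j s
      exact R.rep2 x (τ y z j) w a s
    rw [step, substSum_add, k1 (fun i k u => R.ract (R.lact x (τ y z k) i) w u) a b c]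
    abel
  have hE2 : R.lact y (cobound2 A R τ x z w a c) b
      = R.lact y (R.lact x (τ z w c) a) b
        - R.lact y (R.lact z (τ x w a) c) b
        - substSum3 (fun j k r => R.ract (R.lact y (τ x z j) k) w r) a b c
        - substSum (fun j s => R.ract (τ x z j) (A.br y w b) s) a c
        - substSum (fun j s => R.lact y (τ (A.br x z j) w s) b) a c
        - R.lact y (τ z (A.br x w a) c) b
        + R.lact y (τ x (A.br z w c) a) b := by
    simp only [cobound2, map_sub, map_add, Pi.sub_apply, Pi.add_apply]
    rw [lact_substSum A R y b (fun j s => R.ract (τ x z j) w s) a c,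
        lact_substSum A R y b (fun j s => τ (A.br x z j) w s) a c]
    have step : (fun j s => R.lact y (R.ract (τ x z j) w s) b)
        = fun j s => substSum (fun i u => R.ract (R.lact y (τ x z j) i) w u) b s
            + R.ract (τ x z j) (A.br y w b) s := by
      funext j s
      exact R.rep2 y (τ x z j) w b s
    rw [step, substSum_add, k2 (fun j i u => R.ract (R.lact y (τ x z j) i) w u) a b c]
    abel
  have hE3 : R.lact z (cobound2 A R τ x y w a b) c
      = R.lact z (R.lact x (τ y w b) a) c
        - R.lact z (R.lact y (τ x w a) b) c
        - substSum (fun j s => R.lact z (R.ract (τ x y j) w s) c) a b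
        - substSum (fun j s => R.lact z (τ (A.br x y j) w s) c) a b
        - R.lact z (τ y (A.br x w a) b) c
        + R.lact z (τ x (A.br y w b) a) c := by
    simp only [cobound2, map_sub, map_add, Pi.sub_apply, Pi.add_apply]
    rw [lact_substSum A R z c (fun j s => R.ract (τ x y j) w s) a b,
        lact_substSum A R z c (fun j s => τ (A.br x y j) w s) a b]
  have hE4 : substSum3 (fun j k r => R.ract (cobound2 A R τ x y z j k) w r) a b c
      = substSum3 (fun j k r => R.ract (R.lact x (τ y z k) j) w r) a b c
        - substSum3 (fun j k r => R.ract (R.lact y (τ x z j) k) w r) a b c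
        - substSum3 (fun j k r =>
            substSum (fun i u => R.ract (R.ract (τ x y i) z u) w r) j k) a b c
        - substSum3 (fun j k r =>
            substSum (fun i u => R.ract (τ (A.br x y i) z u) w r) j k) a b c
        - substSum3 (fun j k r => R.ract (τ y (A.br x z j) k) w r) a b c
        + substSum3 (fun j k r => R.ract (τ x (A.br y z k) j) w r) a b c := by
    have step : (fun j k r => R.ract (cobound2 A R τ x y z j k) w r)
        = fun j k r => R.ract (R.lact x (τ y z k) j) w r
            - R.ract (R.lact y (τ x z j) k) w r
            - substSum (fun i u => R.ract (R.ract (τ x y i) z u) w r) j k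
            - substSum (fun i u => R.ract (τ (A.br x y i) z u) w r) j k
            - R.ract (τ y (A.br x z j) k) w r
            + R.ract (τ x (A.br y z k) j) w r := by
      funext j k r
      simp only [cobound2, map_sub, map_add, LinearMap.sub_apply, LinearMap.add_apply,
        Pi.sub_apply, Pi.add_apply, ract_substSum]
    rw [step, substSum3_add, substSum3_sub, substSum3_sub, substSum3_sub, substSum3_sub]
  have hE5 : substSum (fun j r => cobound2 A R τ (A.br x y j) z w r c) a b
      = substSum (fun j s => R.lact (A.br x y j) (τ z w c) s) a b
        - substSum (fun j s => R.lact z (τ (A.br x y j) w s) c) a b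
        - substSum3 (fun j k r =>
            substSum (fun i u => R.ract (τ (A.br x y i) z u) w r) j k) a b c
        - substSum3 (fun j k r =>
            substSum (fun i u => τ (A.br (A.br x y i) z u) w r) j k) a b c
        - substSum (fun j s => τ z (A.br (A.br x y j) w s) c) a b
        + substSum (fun j s => τ (A.br x y j) (A.br z w c) s) a b := by
    have step : (fun j r => cobound2 A R τ (A.br x y j) z w r c)
        = fun j r => R.lact (A.br x y j) (τ z w c) r
            - R.lact z (τ (A.br x y j) w r) c
            - substSum (fun i u => R.ract (τ (A.br x y j) z i) w u) r c
            - substSum (fun i u => τ (A.br (A.br x y j) z i) w u) r c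
            - τ z (A.br (A.br x y j) w r) c
            + τ (A.br x y j) (A.br z w c) r := by
      funext j r
      simp only [cobound2]
    rw [step, substSum_add, substSum_sub, substSum_sub, substSum_sub, substSum_sub,
      k3 (fun j i u => R.ract (τ (A.br x y j) z i) w u) a b c,
      k3 (fun j i u => τ (A.br (A.br x y j) z i) w u) a b c]
  have hE6 : substSum (fun j r => cobound2 A R τ y (A.br x z j) w b r) a c
      = substSum (fun j s => R.lact y (τ (A.br x z j) w s) b) a c
        - substSum (fun j s => R.lact (A.br x z j) (τ y w b) s) a c
        - substSum3 (fun j k r => R.ract (τ y (A.br x z j) k) w r) a b c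
        - substSum3 (fun j k r => τ (A.br y (A.br x z j) k) w r) a b c
        - substSum (fun j s => τ (A.br x z j) (A.br y w b) s) a c
        + substSum (fun j s => τ y (A.br (A.br x z j) w s) b) a c := by
    have step : (fun j r => cobound2 A R τ y (A.br x z j) w b r)
        = fun j r => R.lact y (τ (A.br x z j) w r) b
            - R.lact (A.br x z j) (τ y w b) r
            - substSum (fun i u => R.ract (τ y (A.br x z j) i) w u) b r
            - substSum (fun i u => τ (A.br y (A.br x z j) i) w u) b r
            - τ (A.br x z j) (A.br y w b) r
            + τ y (A.br (A.br x z j) w r) b := by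
      funext j r
      simp only [cobound2]
    rw [step, substSum_add, substSum_sub, substSum_sub, substSum_sub, substSum_sub,
      k2 (fun j k r => R.ract (τ y (A.br x z j) k) w r) a b c,
      k2 (fun j k r => τ (A.br y (A.br x z j) k) w r) a b c]
  have hE8 : substSum (fun j r => cobound2 A R τ x (A.br y z j) w a r) b c
      = substSum (fun j s => R.lact x (τ (A.br y z j) w s) a) b c
        - substSum (fun j s => R.lact (A.br y z j) (τ x w a) s) b c
        - substSum3 (fun j k r => R.ract (τ x (A.br y z k) j) w r) a b c
        - substSum3 (fun j k r => τ (A.br x (A.br y z k) j) w r) a b c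
        - substSum (fun j s => τ (A.br y z j) (A.br x w a) s) b c
        + substSum (fun j s => τ x (A.br (A.br y z j) w s) a) b c := by
    have step : (fun j r => cobound2 A R τ x (A.br y z j) w a r)
        = fun j r => R.lact x (τ (A.br y z j) w r) a
            - R.lact (A.br y z j) (τ x w a) r
            - substSum (fun i u => R.ract (τ x (A.br y z j) i) w u) a r
            - substSum (fun i u => τ (A.br x (A.br y z j) i) w u) a r
            - τ (A.br y z j) (A.br x w a) r
            + τ x (A.br (A.br y z j) w r) a := by
      funext j r
      simp only [cobound2]
    rw [step, substSum_add, substSum_sub, substSum_sub, substSum_sub, substSum_sub,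
      k1 (fun i k u => R.ract (τ x (A.br y z k) i) w u) a b c,
      k1 (fun i k u => τ (A.br x (A.br y z k) i) w u) a b c]
  have h4 : substSum (fun j s => R.ract (τ x y j) (A.br z w c) s) a b
      = substSum3 (fun j k r =>
            substSum (fun i u => R.ract (R.ract (τ x y i) z u) w r) j k) a b c
        + substSum (fun j s => R.lact z (R.ract (τ x y j) w s) c) a b := by
    have step : (fun j s => R.ract (τ x y j) (A.br z w c) s)
        = fun j s => substSum (fun i u => R.ract (R.ract (τ x y j) z i) w u) s c
            + R.lact z (R.ract (τ x y j) w s) c := by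
      funext j s
      exact R.rep3 (τ x y j) z w s c
    rw [step, substSum_add, k3 (fun j i u => R.ract (R.ract (τ x y j) z i) w u) a b c]
  have h5 : substSum3 (fun j k r => τ (A.br x (A.br y z k) j) w r) a b c
      = substSum3 (fun j k r =>
            substSum (fun i u => τ (A.br (A.br x y i) z u) w r) j k) a b c
        + substSum3 (fun j k r => τ (A.br y (A.br x z j) k) w r) a b c := by
    have step : (fun j k r => τ (A.br x (A.br y z k) j) w r)
        = fun j k r => substSum (fun i u => τ (A.br (A.br x y i) z u) w r) j k
            + τ (A.br y (A.br x z j) k) w r := by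
      funext j k r
      rw [A.leib x y z j k]
      simp only [map_add, LinearMap.add_apply, Pi.add_apply, tau1_substSum]
    rw [step, substSum3_add]
  have h6 : τ z (A.br x (A.br y w b) a) c
      = substSum (fun j s => τ z (A.br (A.br x y j) w s) c) a b
        + τ z (A.br y (A.br x w a) b) c := by
    rw [A.leib x y w a b]
    simp only [map_add, LinearMap.add_apply, Pi.add_apply, tau2_substSum]
  have h7 : τ y (A.br x (A.br z w c) a) b
      = substSum (fun j s => τ y (A.br (A.br x z j) w s) b) a c
        + τ y (A.br z (A.br x w a) c) b := by
    rw [A.leib x z w a c]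
    simp only [map_add, LinearMap.add_apply, Pi.add_apply, tau2_substSum]
  have h8 : τ x (A.br y (A.br z w c) b) a
      = substSum (fun j s => τ x (A.br (A.br y z j) w s) a) b c
        + τ x (A.br z (A.br y w b) c) a := by
    rw [A.leib y z w b c]
    simp only [map_add, LinearMap.add_apply, Pi.add_apply, tau2_substSum]
  rw [hE1, hE2, hE3, hE4, hE5, hE6, hE8]
  simp only [cobound2]
  rw [R.rep1 x y (τ z w c) a b, R.rep1 x z (τ y w b) a c, R.rep1 y z (τ x w a) b c,
    h4, h5, h6, h7, h8]
  abel

end Cocycle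

section Sesq

variable {g W : Type*} [AddCommGroup g] [Module ℂ g] [AddCommGroup W] [Module ℂ W]
variable (A : LeibConfAlg g) (R : LeibConfRep g W A) (τ : g →ₗ[ℂ] g →ₗ[ℂ] (ℕ → W))

lemma ract_lmul (f : ℕ → W) (z : g) (j s : ℕ) :
    R.ract (lmul f j) z s = lmul1 (fun p q => R.ract (f p) z q) j s := by
  cases j <;> simp [lmul, lmul1]

lemma tau_lmul (f : ℕ → g) (z : g) (j s : ℕ) :
    τ (lmul f j) z s = lmul1 (fun p q => τ (f p) z q) j s := by
  cases j <;> simp [lmul, lmul1]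

lemma cobound2_D1 (hτ1 : ∀ x y, τ (A.D x) y = - lmul (τ x y)) (x y z : g) (a b : ℕ) :
    cobound2 A R τ (A.D x) y z a b
      = - lmul1 (fun p q => cobound2 A R τ x y z p q) a b := by
  cases a with
  | zero =>
    have hr : lmul1 (fun p q => cobound2 A R τ x y z p q) 0 b = (0 : W) := rfl
    rw [hr, neg_zero]
    simp only [cobound2, R.sesqLl, A.sesqL, hτ1, Pi.neg_apply, map_neg, LinearMap.neg_apply,
      ract_lmul, tau_lmul, substSum_neg, substSum_lmul1, lmul_zero, lmul_succ, lmul1_zero, lmul1_succ, neg_zero, map_zero,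
      Pi.zero_apply, neg_neg]
    abel
  | succ a =>
    have hr : lmul1 (fun p q => cobound2 A R τ x y z p q) (a + 1) b
        = cobound2 A R τ x y z a b := rfl
    rw [hr]
    simp only [cobound2, R.sesqLl, A.sesqL, hτ1, Pi.neg_apply, map_neg, LinearMap.neg_apply,
      ract_lmul, tau_lmul, substSum_neg, substSum_lmul1, lmul_zero, lmul_succ, lmul1_zero, lmul1_succ, neg_zero, map_zero,
      Pi.zero_apply, neg_neg]
    abel

lemma cobound2_D2 (hτ1 : ∀ x y, τ (A.D x) y = - lmul (τ x y))
    (hτ2 : ∀ x y, τ x (A.D y) = (fun n => R.DM (τ x y n)) + lmul (τ x y))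
    (x y z : g) (a b : ℕ) :
    cobound2 A R τ x (A.D y) z a b
      = - lmul2 (fun p q => cobound2 A R τ x y z p q) a b := by
  cases b with
  | zero =>
    have hr : lmul2 (fun p q => cobound2 A R τ x y z p q) a 0 = (0 : W) := rfl
    rw [hr, neg_zero]
    simp only [cobound2, R.sesqLl, R.sesqRl, A.sesqL, A.sesqR, hτ1, hτ2, Pi.neg_apply,
      Pi.add_apply, map_neg, map_add, LinearMap.neg_apply, LinearMap.add_apply,
      ract_lmul, tau_lmul, substSum_neg, substSum_add, substSum_lmul1, substSum_lmul2,
      lmul_zero, lmul_succ, lmul1_zero, lmul1_succ, neg_zero, map_zero, Pi.zero_apply, neg_neg]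
    abel
  | succ b =>
    have hr : lmul2 (fun p q => cobound2 A R τ x y z p q) a (b + 1)
        = cobound2 A R τ x y z a b := rfl
    rw [hr]
    simp only [cobound2, R.sesqLl, R.sesqRl, A.sesqL, A.sesqR, hτ1, hτ2, Pi.neg_apply,
      Pi.add_apply, map_neg, map_add, LinearMap.neg_apply, LinearMap.add_apply,
      ract_lmul, tau_lmul, substSum_neg, substSum_add, substSum_lmul1, substSum_lmul2,
      lmul_zero, lmul_succ, lmul1_zero, lmul1_succ, neg_zero, map_zero, Pi.zero_apply, neg_neg]
    abel

lemma cobound2_D3 (hτ1 : ∀ x y, τ (A.D x) y = - lmul (τ x y))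
    (hτ2 : ∀ x y, τ x (A.D y) = (fun n => R.DM (τ x y n)) + lmul (τ x y))
    (x y z : g) (a b : ℕ) :
    cobound2 A R τ x y (A.D z) a b
      = R.DM (cobound2 A R τ x y z a b)
        + lmul1 (fun p q => cobound2 A R τ x y z p q) a b
        + lmul2 (fun p q => cobound2 A R τ x y z p q) a b := by
  cases a with
  | zero =>
    cases b with
    | zero =>
      simp only [cobound2, R.sesqLr, R.sesqRr, A.sesqR, hτ2, Pi.add_apply, map_add,
        LinearMap.add_apply, ract_lmul, tau_lmul, substSum_add, substSum_lmul1,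
        substSum_lmul2, DM_substSum, lmul_zero, lmul_succ, lmul1_zero, lmul1_succ, lmul2_zero, lmul2_succ, map_sub, map_neg, Pi.sub_apply,
        Pi.neg_apply, map_zero, Pi.zero_apply, add_zero, zero_add]
      try abel
    | succ b =>
      simp only [cobound2, R.sesqLr, R.sesqRr, A.sesqR, hτ2, Pi.add_apply, map_add,
        LinearMap.add_apply, ract_lmul, tau_lmul, substSum_add, substSum_lmul1,
        substSum_lmul2, DM_substSum, lmul_zero, lmul_succ, lmul1_zero, lmul1_succ, lmul2_zero, lmul2_succ, map_sub, map_neg, Pi.sub_apply,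
        Pi.neg_apply, map_zero, Pi.zero_apply, add_zero, zero_add]
      try abel
  | succ a =>
    cases b with
    | zero =>
      simp only [cobound2, R.sesqLr, R.sesqRr, A.sesqR, hτ2, Pi.add_apply, map_add,
        LinearMap.add_apply, ract_lmul, tau_lmul, substSum_add, substSum_lmul1,
        substSum_lmul2, DM_substSum, lmul_zero, lmul_succ, lmul1_zero, lmul1_succ, lmul2_zero, lmul2_succ, map_sub, map_neg, Pi.sub_apply,
        Pi.neg_apply, map_zero, Pi.zero_apply, add_zero, zero_add]
      try abel
    | succ b =>
      simp only [cobound2, R.sesqLr, R.sesqRr, A.sesqR, hτ2, Pi.add_apply, map_add,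
        LinearMap.add_apply, ract_lmul, tau_lmul, substSum_add, substSum_lmul1,
        substSum_lmul2, DM_substSum, lmul_zero, lmul_succ, lmul1_zero, lmul1_succ, lmul2_zero, lmul2_succ, map_sub, map_neg, Pi.sub_apply,
        Pi.neg_apply, map_zero, Pi.zero_apply, add_zero, zero_add]
      try abel

end Sesq

/-- For any conformal sesquilinear 2-cochain `τ`, the triple `(W →0 g, ρ₂, δτ)` is a
skeletal `2`-term `Leib_∞`-conformal algebra; in particular `δτ` is a `3`-cocycle. -/
theorem stmt12 {g W : Type*} [AddCommGroup g] [Module ℂ g] [AddCommGroup W] [Module ℂ W]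
    (A : LeibConfAlg g) (R : LeibConfRep g W A) (τ : g →ₗ[ℂ] g →ₗ[ℂ] (ℕ → W))
    (hτ1 : ∀ x y, τ (A.D x) y = - lmul (τ x y))
    (hτ2 : ∀ x y, τ x (A.D y) = (fun n => R.DM (τ x y n)) + lmul (τ x y)) :
    ∃ T : TwoTerm g W, T.d = 0 ∧ T.D0 = A.D ∧ T.D1 = R.DM ∧
      T.ρ00 = A.br ∧ T.ρ01 = R.lact ∧ T.ρ10 = R.ract ∧
      (∀ x y z a b, T.ρ3 x y z a b = cobound2 A R τ x y z a b) := by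
  refine ⟨{ D0 := A.D
            D1 := R.DM
            d := 0
            hdD := by intro v; simp
            ρ00 := A.br
            ρ01 := R.lact
            ρ10 := R.ract
            ρ3 := rho3 A R τ
            sesq00l := A.sesqL
            sesq00r := A.sesqR
            sesq01l := R.sesqLl
            sesq01r := R.sesqLr
            sesq10l := R.sesqRl
            sesq10r := R.sesqRr
            sesq3a := by
              intro x y z
              funext a b
              exact cobound2_D1 A R τ hτ1 x y z a b
            sesq3b := by
              intro x y z
              funext a b
              exact cobound2_D2 A R τ hτ1 hτ2 x y z a b
            sesq3c := by
              intro x y z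
              funext a b
              exact cobound2_D3 A R τ hτ1 hτ2 x y z a b
            c2 := by intro x u n; simp
            c3 := by intro u x n; simp
            c4 := by intro u v; simp
            c5 := by
              intro x y z m n
              simp only [LinearMap.zero_apply, map_zero, Pi.zero_apply]
              rw [A.leib x y z m n]
              abel
            c6 := by
              intro x y v m n
              simp only [LinearMap.zero_apply, map_zero, Pi.zero_apply]
              rw [R.rep1 x y v m n]
              abel
            c7 := by
              intro x v y m n
              simp only [LinearMap.zero_apply, map_zero, Pi.zero_apply]
              rw [R.rep2 x v y m n]
              abel
            c8 := by
              intro v x y m n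
              simp only [LinearMap.zero_apply, map_zero, Pi.zero_apply]
              rw [R.rep3 v x y m n]
              abel
            c9 := by
              intro x y z w a b c
              exact cocycle A R τ x y z w a b c },
    rfl, rfl, rfl, rfl, rfl, rfl, fun x y z a b => rfl⟩

end LCF
end
end

section
/- Let (𝒢₁ →d 𝒢₀, ρ₂, ρ₃ = 0) be a strict 2-term Leib∞-conformal algebra. Then 𝒢₁ with the λ-bracket [u_λ v]¹ := (ρ₂)_λ(du, v) = (ρ₂)_λ(u, dv) is a Leibniz conformal algebra, and d : 𝒢₁ → 𝒢₀ is a morphism of Leibniz conformal algebras to (𝒢₀, [x_λ y]⁰ := (ρ₂)_λ(x,y)), i.e. d[u_λ v]¹ = [(du)_λ (dv)]⁰ for all u, v ∈ 𝒢₁. -/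
noncomputable section

open scoped BigOperators

namespace LCF
/-- For a strict `2`-term `Leib_∞`-conformal algebra, `𝒢₁` with the bracket
`[u_λ v]¹ := (ρ₂)_λ(du, v) = (ρ₂)_λ(u, dv)` is a Leibniz conformal algebra, and
`d : 𝒢₁ → 𝒢₀` is a morphism of Leibniz conformal algebras onto
`(𝒢₀, [x_λ y]⁰ := (ρ₂)_λ(x,y))`. -/
theorem stmt15 {G0 G1 : Type*} [AddCommGroup G0] [Module ℂ G0]
    [AddCommGroup G1] [Module ℂ G1] (T : TwoTerm G0 G1) (hstrict : T.ρ3 = 0) :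
    (∀ u v, T.ρ01 (T.d u) v = T.ρ10 u (T.d v)) ∧
    ∃ L : LeibConfAlg G1, L.D = T.D1 ∧
      (∀ u v, L.br u v = T.ρ01 (T.d u) v) ∧
      (∀ u v n, T.d (L.br u v n) = T.ρ00 (T.d u) (T.d v) n) := by
  refine ⟨T.c4, ?_⟩
  refine ⟨{ D := T.D1
            br := T.ρ01.comp T.d
            sesqL := ?_
            sesqR := ?_
            leib := ?_ }, rfl, fun u v => rfl, fun u v n => T.c2 _ _ _⟩
  · intro x y
    simp [LinearMap.comp_apply, T.hdD, T.sesq01l]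
  · intro x y
    simp [LinearMap.comp_apply, T.sesq01r]
  · intro x y z m n
    have h := T.c6 (T.d x) (T.d y) z m n
    rw [hstrict] at h
    simp only [LinearMap.zero_apply, Pi.zero_apply] at h
    have hs : substSum (fun j s => T.ρ01 (T.ρ00 (T.d x) (T.d y) j) z s) m n
        = substSum (fun j s => (T.ρ01.comp T.d) ((T.ρ01.comp T.d) x y j) z s) m n := by
      unfold substSum
      refine Finset.sum_congr rfl fun j _ => ?_
      simp [LinearMap.comp_apply, T.c2]
    simp only [LinearMap.comp_apply] at *
    rw [← hs]
    have := sub_eq_zero.mpr h.symm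
    rw [sub_sub, sub_sub] at this
    have h2 : T.ρ01 (T.d x) (T.ρ01 (T.d y) z n) m
        = substSum (fun j s => T.ρ01 (T.ρ00 (T.d x) (T.d y) j) z s) m n
          + T.ρ01 (T.d y) (T.ρ01 (T.d x) z m) n := by
      have := h.symm
      linear_combination (norm := abel) this
    exact h2

end LCF
end
end

section
/- Let (𝔤, 𝔥, d, Φˡ, Φʳ) be a crossed module of Leibniz conformal algebras. Then (𝔤 →d 𝔥, ρ₂, ρ₃ = 0) is a strict 2-term Leib∞-conformal algebra (with 𝒢₀ = 𝔥 and 𝒢₁ = 𝔤), where (ρ₂)_λ(u,v) = [u_λ v]^𝔥, (ρ₂)_λ(u,x) = Φˡ_λ(u,x) and (ρ₂)_λ(x,u) = Φʳ_λ(x,u) for u, v ∈ 𝔥 and x ∈ 𝔤. -/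
noncomputable section

open scoped BigOperators

namespace LCF
/-- A crossed module of Leibniz conformal algebras `(𝔤, 𝔥, d, Φˡ, Φʳ)`. -/
structure CrossedMod (gg hh : Type*) [AddCommGroup gg] [Module ℂ gg]
    [AddCommGroup hh] [Module ℂ hh] where
  Ag : LeibConfAlg gg
  Ah : LeibConfAlg hh
  d : gg →ₗ[ℂ] hh
  dD : ∀ x, d (Ag.D x) = Ah.D (d x)
  dbr : ∀ x y n, d (Ag.br x y n) = Ah.br (d x) (d y) n
  Φl : hh →ₗ[ℂ] gg →ₗ[ℂ] (ℕ → gg)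
  Φr : gg →ₗ[ℂ] hh →ₗ[ℂ] (ℕ → gg)
  sesqLl : ∀ h x, Φl (Ah.D h) x = - lmul (Φl h x)
  sesqLr : ∀ h x, Φl h (Ag.D x) = (fun n => Ag.D (Φl h x n)) + lmul (Φl h x)
  sesqRl : ∀ x h, Φr (Ag.D x) h = - lmul (Φr x h)
  sesqRr : ∀ x h, Φr x (Ah.D h) = (fun n => Ag.D (Φr x h n)) + lmul (Φr x h)
  -- 𝔤 is a representation of 𝔥 via `Φˡ` (left action) and `Φʳ` (right action)
  rep1 : ∀ h k x m n,
    Φl h (Φl k x n) m = substSum (fun j s => Φl (Ah.br h k j) x s) m n + Φl k (Φl h x m) n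
  rep2 : ∀ h x k m n,
    Φl h (Φr x k n) m = substSum (fun j s => Φr (Φl h x j) k s) m n + Φr x (Ah.br h k m) n
  rep3 : ∀ x h k m n,
    Φr x (Ah.br h k n) m = substSum (fun j s => Φr (Φr x h j) k s) m n + Φl h (Φr x k m) n
  cm1 : ∀ h x n, d (Φl h x n) = Ah.br h (d x) n
  cm2 : ∀ x h n, d (Φr x h n) = Ah.br (d x) h n
  cm3l : ∀ x y, Φl (d x) y = Ag.br x y
  cm3r : ∀ x y, Φr x (d y) = Ag.br x y
  cm4 : ∀ x y h m n,
    Ag.br x (Φr y h n) m = substSum (fun j s => Φr (Ag.br x y j) h s) m n + Ag.br y (Φr x h m) n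
  cm5 : ∀ x h y m n,
    Ag.br x (Φl h y n) m = substSum (fun j s => Ag.br (Φr x h j) y s) m n + Φl h (Ag.br x y m) n
  cm6 : ∀ h x y m n,
    Φl h (Ag.br x y n) m = substSum (fun j s => Ag.br (Φl h x j) y s) m n + Ag.br x (Φl h y m) n
end LCF

namespace LCF
/-- Every crossed module of Leibniz conformal algebras `(𝔤, 𝔥, d, Φˡ, Φʳ)` gives a
strict `2`-term `Leib_∞`-conformal algebra `(𝔤 →d 𝔥, ρ₂, 0)` with `𝒢₀ = 𝔥`, `𝒢₁ = 𝔤`. -/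
theorem stmt17 {gg hh : Type*} [AddCommGroup gg] [Module ℂ gg]
    [AddCommGroup hh] [Module ℂ hh] (C : CrossedMod gg hh) :
    ∃ T : TwoTerm hh gg,
      T.d = C.d ∧ T.D0 = C.Ah.D ∧ T.D1 = C.Ag.D ∧
      T.ρ00 = C.Ah.br ∧ T.ρ01 = C.Φl ∧ T.ρ10 = C.Φr ∧ T.ρ3 = 0 := by
  refine ⟨{
    D0 := C.Ah.D
    D1 := C.Ag.D
    d := C.d
    hdD := C.dD
    ρ00 := C.Ah.br
    ρ01 := C.Φl
    ρ10 := C.Φr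
    ρ3 := 0
    sesq00l := C.Ah.sesqL
    sesq00r := C.Ah.sesqR
    sesq01l := C.sesqLl
    sesq01r := C.sesqLr
    sesq10l := C.sesqRl
    sesq10r := C.sesqRr
    sesq3a := ?_
    sesq3b := ?_
    sesq3c := ?_
    c2 := fun x u n => C.cm1 x u n
    c3 := fun u x n => C.cm2 u x n
    c4 := fun u v => by rw [C.cm3l, C.cm3r]
    c5 := ?_
    c6 := ?_
    c7 := ?_
    c8 := ?_
    c9 := ?_ }, rfl, rfl, rfl, rfl, rfl, rfl, rfl⟩ <;> intros
  · funext m n; cases m <;> simp [lmul1]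
  · funext m n; cases n <;> simp [lmul1, lmul2, lmul]
  · funext m n; cases m <;> cases n <;> simp [lmul1, lmul2, lmul]
  · simp only [LinearMap.zero_apply, Pi.zero_apply, map_zero]
    rw [C.Ah.leib]; abel
  · simp only [LinearMap.zero_apply, Pi.zero_apply, map_zero]
    rw [C.rep1]; abel
  · simp only [LinearMap.zero_apply, Pi.zero_apply, map_zero]
    rw [C.rep2]; abel
  · simp only [LinearMap.zero_apply, Pi.zero_apply, map_zero]
    rw [C.rep3]; abel
  · simp [substSum, substSum3]
end LCF
end
end
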